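/- arXiv:math/9907213 — 3 statements merged into one kernel-verified Lean document; each statement's English description precedes it below -/
import Mathlib

section
/- Let M be a fixed nonzero element of A = 𝔽_q[T]. Suppose that q ≠ 2, or that q = 2 and T(T+1) does not divide M. Then for every f ∈ A there exist finitely many f_1, …, f_n ∈ A with f ≡ f_1 + ⋯ + f_n (mod M) and gcd(f_i, M) = 1 for all i. -/
open Polynomial

section Aux

variable {Fq : Type} [Field Fq]

/-- A prime `P` is "good" for `f` if `f` can be split as `x + (f - x)` with both parts
not divisible by `P`. -/
private def GoodFor (P f : Polynomial Fq) : Prop :=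
  ∃ x : Polynomial Fq, ¬ P ∣ x ∧ ¬ P ∣ (f - x)

/-- Coprimality to `M` is equivalent to sharing no prime factor with `M`. -/
private lemma coprime_iff_no_common_prime (M g : Polynomial Fq) (hM : M ≠ 0) :
    IsCoprime g M ↔ ∀ P : Polynomial Fq, Prime P → P ∣ M → ¬ P ∣ g := by
  classical
  constructor
  · intro h P hP hPM hPg
    exact hP.not_unit (h.isUnit_of_dvd' hPg hPM)
  · intro h
    by_contra hcon
    have hgcd : ¬ IsUnit (EuclideanDomain.gcd g M) := by
      intro hu
      exact hcon ((EuclideanDomain.gcd_isUnit_iff ..).1 hu)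
    have hgcd0 : EuclideanDomain.gcd g M ≠ 0 := by
      intro h0
      exact hM (EuclideanDomain.gcd_eq_zero_iff.1 h0).2
    obtain ⟨P, hPirr, hPd⟩ := WfDvdMonoid.exists_irreducible_factor hgcd hgcd0
    exact h P hPirr.prime (hPd.trans (EuclideanDomain.gcd_dvd_right g M))
      (hPd.trans (EuclideanDomain.gcd_dvd_left g M))

/-- CRT-style construction over a finite set of pairwise-coprime primes. -/
private lemma exists_good_summand_finset (f : Polynomial Fq) (S : Finset (Polynomial Fq))
    (hS : ∀ P ∈ S, Prime P) (hco : (S : Set (Polynomial Fq)).Pairwise IsCoprime) :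
    ∃ h : Polynomial Fq, ∀ P ∈ S, ¬ P ∣ h ∧ (GoodFor P f → ¬ P ∣ (f - h)) := by
  classical
  induction S using Finset.induction_on with
  | empty => exact ⟨1, by simp⟩
  | @insert P S hPS ih =>
    obtain ⟨h, hh⟩ := ih (fun Q hQ => hS Q (Finset.mem_insert_of_mem hQ))
      (hco.mono (fun x hx => Finset.mem_coe.2 (Finset.mem_insert_of_mem (Finset.mem_coe.1 hx))))
    have hP : Prime P := hS P (Finset.mem_insert_self P S)
    set N : Polynomial Fq := ∏ Q ∈ S, Q with hN
    have hPN : IsCoprime P N := by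
      apply IsCoprime.prod_right
      intro Q hQ
      exact hco (Finset.mem_insert_self P S) (Finset.mem_insert_of_mem hQ)
        (fun hEq => hPS (hEq ▸ hQ))
    -- choose the target residue x mod P
    have hx : ∃ x : Polynomial Fq, ¬ P ∣ x ∧ (GoodFor P f → ¬ P ∣ (f - x)) := by
      by_cases hg : GoodFor P f
      · obtain ⟨x, hx1, hx2⟩ := hg
        exact ⟨x, hx1, fun _ => hx2⟩
      · exact ⟨1, fun h1 => hP.not_unit (isUnit_of_dvd_one h1), fun hg' => absurd hg' hg⟩
    obtain ⟨x, hx1, hx2⟩ := hx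
    obtain ⟨b, a, hab⟩ := hPN  -- b * P + a * N = 1
    set h' : Polynomial Fq := h + ((x - h) * a) * N with hh'def
    have key : h' - x = (h - x) * (b * P) := by
      rw [hh'def]; linear_combination (x - h) * hab
    have hPx : P ∣ h' - x := key ▸ ⟨(h - x) * b, by ring⟩
    refine ⟨h', fun Q hQ => ?_⟩
    rcases Finset.mem_insert.1 hQ with rfl | hQS
    · constructor
      · intro hd
        have hsub := dvd_sub hd hPx
        rw [show h' - (h' - x) = x by ring] at hsub
        exact hx1 hsub
      · intro hg hd
        have hadd := dvd_add hd hPx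
        rw [show f - h' + (h' - x) = f - x by ring] at hadd
        exact hx2 hg hadd
    · have hQN : Q ∣ N := Finset.dvd_prod_of_mem _ hQS
      have hmod : Q ∣ h' - h := by
        rw [show h' - h = ((x - h) * a) * N by rw [hh'def]; ring]
        exact hQN.mul_left ((x - h) * a)
      obtain ⟨ih1, ih2⟩ := hh Q hQS
      constructor
      · intro hd
        have hsub := dvd_sub hd hmod
        rw [show h' - (h' - h) = h by ring] at hsub
        exact ih1 hsub
      · intro hg hd
        have hadd := dvd_add hd hmod
        rw [show f - h' + (h' - h) = f - h by ring] at hadd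
        exact ih2 hg hadd

/-- Main construction lemma: there is `h` coprime to `M` such that `f - h` avoids
every "good" prime factor of `M`. -/
private lemma exists_good_summand (M : Polynomial Fq) (hM : M ≠ 0) (f : Polynomial Fq) :
    ∃ h : Polynomial Fq, ∀ P : Polynomial Fq, Prime P → P ∣ M →
      (¬ P ∣ h ∧ (GoodFor P f → ¬ P ∣ (f - h))) := by
  classical
  set S : Finset (Polynomial Fq) :=
    (UniqueFactorizationMonoid.normalizedFactors M).toFinset with hSdef
  have hSprime : ∀ P ∈ S, Prime P := fun P hP =>
    UniqueFactorizationMonoid.prime_of_normalized_factor P (Multiset.mem_toFinset.1 hP)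
  have hSco : (S : Set (Polynomial Fq)).Pairwise IsCoprime := by
    intro P hP Q hQ hne
    have hPp := hSprime P (by simpa using hP)
    have hQp := hSprime Q (by simpa using hQ)
    have hnd : ¬ P ∣ Q := by
      intro hd
      have hassoc := hPp.associated_of_dvd hQp hd
      have : P = Q := by
        rw [← UniqueFactorizationMonoid.normalize_normalized_factor P
            (Multiset.mem_toFinset.1 (Finset.mem_coe.1 hP)),
          ← UniqueFactorizationMonoid.normalize_normalized_factor Q
            (Multiset.mem_toFinset.1 (Finset.mem_coe.1 hQ))]
        exact normalize_eq_normalize hassoc.dvd hassoc.symm.dvd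
      exact hne this
    exact (hPp.coprime_iff_not_dvd).2 hnd
  obtain ⟨h, hh⟩ := exists_good_summand_finset f S hSprime hSco
  refine ⟨h, fun P hP hPM => ?_⟩
  obtain ⟨Q, hQmem, hassoc⟩ :=
    UniqueFactorizationMonoid.exists_mem_normalizedFactors_of_dvd hM hP.irreducible hPM
  have hQS : Q ∈ S := Multiset.mem_toFinset.2 hQmem
  obtain ⟨hh1, hh2⟩ := hh Q hQS
  have hdvd : ∀ x : Polynomial Fq, P ∣ x ↔ Q ∣ x := fun x => hassoc.dvd_iff_dvd_left
  constructor
  · rw [hdvd]; exact hh1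
  · intro hg
    rw [hdvd]
    apply hh2
    obtain ⟨x, hx1, hx2⟩ := hg
    exact ⟨x, by rw [← hdvd]; exact hx1, by rw [← hdvd]; exact hx2⟩

/-- If a prime is not good for `g`, the base field has exactly two elements. -/
private lemma card_eq_two_of_not_good [Fintype Fq] {P g : Polynomial Fq} (hP : Prime P)
    (hng : ¬ GoodFor P g) : Fintype.card Fq = 2 := by
  classical
  by_contra hcard
  have h2 : 1 < Fintype.card Fq := Fintype.one_lt_card
  have h3 : 3 ≤ Fintype.card Fq := by omega
  have hex : ∃ a b : Fq, a ≠ 0 ∧ b ≠ 0 ∧ a ≠ b := by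
    by_contra hcon
    push_neg at hcon
    obtain ⟨a, ha⟩ := exists_ne (0 : Fq)
    have huniv : (Finset.univ : Finset Fq) ⊆ {0, a} := by
      intro x _
      rcases eq_or_ne x 0 with rfl | hx
      · simp
      · simp [hcon x a hx ha]
    have hle := Finset.card_le_card huniv
    rw [Finset.card_univ] at hle
    have h2' : ({0, a} : Finset Fq).card ≤ 2 :=
      (Finset.card_insert_le _ _).trans (by simp)
    omega
  obtain ⟨a, b, ha, hb, hab⟩ := hex
  have key : ∀ c : Fq, c ≠ 0 → P ∣ g - C c := by
    intro c hc
    by_contra hnd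
    apply hng
    refine ⟨C c, ?_, hnd⟩
    intro hdc
    have hu : IsUnit (C c) := isUnit_C.2 (Ne.isUnit hc)
    exact hP.not_unit (isUnit_of_dvd_unit hdc hu)
  have hdvd : P ∣ C (b - a) := by
    have := dvd_sub (key a ha) (key b hb)
    rw [show g - C a - (g - C b) = C (b - a) by rw [map_sub]; ring] at this
    exact this
  have hu : IsUnit (C (b - a)) := isUnit_C.2 (Ne.isUnit (sub_ne_zero.2 (Ne.symm hab)))
  exact hP.not_unit (isUnit_of_dvd_unit hdvd hu)

/-- If a prime is not good for `g`, then it divides `g - 1` and is (an associate of)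
`X` or `X - 1`. -/
private lemma structure_of_not_good {P g : Polynomial Fq} (hP : Prime P)
    (hng : ¬ GoodFor P g) :
    P ∣ (g - 1) ∧ (P ∣ (X : Polynomial Fq) ∨ P ∣ (X - C 1 : Polynomial Fq)) := by
  have key : ∀ x : Polynomial Fq, ¬ P ∣ x → P ∣ (g - x) := by
    intro x hx
    by_contra hnd
    exact hng ⟨x, hx, hnd⟩
  have h1 : P ∣ g - 1 := key 1 (fun h => hP.not_unit (isUnit_of_dvd_one h))
  refine ⟨h1, ?_⟩
  by_contra hcon
  push_neg at hcon
  obtain ⟨hX, hX1⟩ := hcon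
  have d1 : P ∣ g - X := key X hX
  have d2 : P ∣ g - (X - C 1) := key (X - C 1) hX1
  have : P ∣ C 1 := by
    have := dvd_sub d2 d1
    have heq : (g - (X - C 1)) - (g - X) = C 1 := by ring
    rwa [heq] at this
  simp only [map_one] at this
  exact hP.not_unit (isUnit_of_dvd_one this)

end Aux

/-- **Proposition 2.2 (positive part).**
Let `A = 𝔽_q[T]` and let `M` be a fixed nonzero element of `A`.  Suppose that `q ≠ 2`, or
that `q = 2` and `T(T+1)` does not divide `M`.  Then for every `f ∈ A` there exist finitely
many `f_1, …, f_n ∈ A` (with `n ≥ 1`) such that `f ≡ f_1 + ⋯ + f_n (mod M)` and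
`gcd(f_i, M) = 1` (i.e. `f_i` and `M` are relatively prime) for all `i`. -/
theorem carlitz_kummer_decomposition_exists
    {Fq : Type} [Field Fq] [Fintype Fq]
    (M : Polynomial Fq) (hM : M ≠ 0)
    (hq : Fintype.card Fq ≠ 2 ∨ ¬ (X * (X + 1) ∣ M))
    (f : Polynomial Fq) :
    ∃ (n : ℕ) (g : Fin n → Polynomial Fq), 0 < n ∧
      (∀ i, IsCoprime (g i) M) ∧ M ∣ (f - ∑ i, g i) := by
  classical
  obtain ⟨h₁, hh₁⟩ := exists_good_summand M hM f
  set r₁ : Polynomial Fq := f - h₁ with hr₁def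
  have hcop₁ : IsCoprime h₁ M :=
    (coprime_iff_no_common_prime M h₁ hM).2 (fun P hP hPM => (hh₁ P hP hPM).1)
  by_cases hr : IsCoprime r₁ M
  · refine ⟨2, ![h₁, r₁], two_pos, ?_, ?_⟩
    · intro i
      fin_cases i
      · exact hcop₁
      · exact hr
    · rw [Fin.sum_univ_two]
      simp only [Matrix.cons_val_zero, Matrix.cons_val_one, Matrix.head_cons, hr₁def]
      ring_nf
      simp
  · -- there is a prime P₀ ∣ M dividing r₁; it is not good for f
    have hex : ∃ P₀ : Polynomial Fq, Prime P₀ ∧ P₀ ∣ M ∧ P₀ ∣ r₁ := by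
      by_contra hcon
      push_neg at hcon
      exact hr ((coprime_iff_no_common_prime M r₁ hM).2
        (fun P hP hPM => hcon P hP hPM))
    obtain ⟨P₀, hP₀, hP₀M, hP₀r₁⟩ := hex
    have hng₀ : ¬ GoodFor P₀ f := fun hg => (hh₁ P₀ hP₀ hP₀M).2 hg hP₀r₁
    have hcard : Fintype.card Fq = 2 := card_eq_two_of_not_good hP₀ hng₀
    have hqM : ¬ (X * (X + 1) ∣ M) := hq.resolve_left (fun h => h hcard)
    have h2zero : (2 : Fq) = 0 := by
      have := FiniteField.cast_card_eq_zero Fq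
      rwa [hcard] at this
    have hX1eq : (X - C 1 : Polynomial Fq) = X + 1 := by
      have : (C 1 : Polynomial Fq) = - 1 := by
        have h1 : (1 : Fq) = -1 := by linear_combination h2zero
        rw [map_one]
        calc (1 : Polynomial Fq) = C 1 := (map_one C).symm
        _ = C (-1) := by rw [← h1]
        _ = - C 1 := by rw [map_neg]
        _ = - 1 := by rw [map_one]
      rw [this]; ring
    obtain ⟨_, hP₀X⟩ := structure_of_not_good hP₀ hng₀
    -- second application, to r₁
    obtain ⟨h₂, hh₂⟩ := exists_good_summand M hM r₁
    set r₂ : Polynomial Fq := r₁ - h₂ with hr₂def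
    have hcop₂ : IsCoprime h₂ M :=
      (coprime_iff_no_common_prime M h₂ hM).2 (fun P hP hPM => (hh₂ P hP hPM).1)
    have hcop₃ : IsCoprime r₂ M := by
      apply (coprime_iff_no_common_prime M r₂ hM).2
      intro P hP hPM hPr₂
      by_cases hg : GoodFor P r₁
      · exact (hh₂ P hP hPM).2 hg hPr₂
      · obtain ⟨hPr1, hPX⟩ := structure_of_not_good hP hg
        -- P and P₀ are each associated to X or X - 1
        have hsame : Associated P P₀ ∨ (X * (X + 1) ∣ M) := by
          rcases hPX with h1 | h1 <;> rcases hP₀X with h2 | h2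
          · exact Or.inl ((hP.associated_of_dvd prime_X h1).trans
              (hP₀.associated_of_dvd prime_X h2).symm)
          · refine Or.inr ?_
            rw [← hX1eq]
            refine IsCoprime.mul_dvd ⟨1, -1, by rw [C_1]; ring⟩ ?_ ?_
            · exact ((hP.associated_of_dvd prime_X h1).symm.dvd).trans hPM
            · have hprime : Prime (X - C 1 : Polynomial Fq) := prime_X_sub_C 1
              exact ((hP₀.associated_of_dvd hprime h2).symm.dvd).trans hP₀M
          · refine Or.inr ?_
            rw [← hX1eq]
            refine IsCoprime.mul_dvd ⟨1, -1, by rw [C_1]; ring⟩ ?_ ?_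
            · exact ((hP₀.associated_of_dvd prime_X h2).symm.dvd).trans hP₀M
            · have hprime : Prime (X - C 1 : Polynomial Fq) := prime_X_sub_C 1
              exact ((hP.associated_of_dvd hprime h1).symm.dvd).trans hPM
          · have hprime : Prime (X - C 1 : Polynomial Fq) := prime_X_sub_C 1
            exact Or.inl ((hP.associated_of_dvd hprime h1).trans
              (hP₀.associated_of_dvd hprime h2).symm)
        rcases hsame with hassoc | hdvd
        · -- P ∣ r₁ and P ∣ r₁ - 1 : contradiction
          have hPr : P ∣ r₁ := (hassoc.dvd_iff_dvd_left).2 hP₀r₁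
          have : P ∣ (1 : Polynomial Fq) := by
            have := dvd_sub hPr hPr1
            simpa using this
          exact hP.not_unit (isUnit_of_dvd_one this)
        · exact hqM hdvd
    refine ⟨3, ![h₁, h₂, r₂], three_pos, ?_, ?_⟩
    · intro i
      fin_cases i
      · exact hcop₁
      · exact hcop₂
      · exact hcop₃
    · rw [Fin.sum_univ_three]
      simp only [Matrix.cons_val_zero, Matrix.cons_val_one, Matrix.head_cons,
        Matrix.cons_val_two, Matrix.tail_cons, hr₂def, hr₁def]
      ring_nf
      simp
end

section
/- Let F be an extension of k inside k̄ with Λ_M ⊆ F, and let E/F be a finite Galois extension whose Galois group G = Gal(E/F) is equipped with an A-module structure (extending its group structure) under which G is A-isomorphic to A/(M). Then there exists α ∈ E such that E = F(α) and α satisfies an equation X^M − a = 0 for some a ∈ F, i.e. α^M ∈ F. -/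
open Polynomial IntermediateField

set_option synthInstance.maxHeartbeats 1000000
set_option maxHeartbeats 1000000

/-- `ψ` is the Carlitz module: the ring homomorphism `A = 𝔽_q[T] → End_{𝔽_q}(k̄, +)`
determined by `T ↦ (α ↦ Tα + α^q)` and `c ↦ (α ↦ cα)` for constants `c ∈ 𝔽_q`. -/
def IsCarlitz {Fq : Type} [Field Fq] [Fintype Fq]
    (ψ : Polynomial Fq →+* AddMonoid.End (AlgebraicClosure (RatFunc Fq))) : Prop :=
  (∀ α, ψ X α = algebraMap (RatFunc Fq) (AlgebraicClosure (RatFunc Fq)) RatFunc.X * α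
      + α ^ Fintype.card Fq) ∧
  (∀ (c : Fq) (α), ψ (C c) α
      = algebraMap (RatFunc Fq) (AlgebraicClosure (RatFunc Fq)) (RatFunc.C c) * α)

/-! ### Auxiliary development: additive Carlitz polynomials -/

/-- The `i`-fold "Carlitz composition" polynomial. -/
noncomputable def carlPoly {R : Type} [CommRing R] (t : R) (q : ℕ) : ℕ → R[X]
  | 0 => X
  | (i + 1) => C t * carlPoly t q i + carlPoly t q i ^ q

theorem carlPoly_monic_natDegree {R : Type} [Field R] {t : R} (ht : t ≠ 0) {q : ℕ}
    (hq : 1 < q) : ∀ i, (carlPoly t q i).Monic ∧ (carlPoly t q i).natDegree = q ^ i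
  | 0 => by simp [carlPoly, monic_X]
  | (i + 1) => by
    obtain ⟨hm, hd⟩ := carlPoly_monic_natDegree ht hq i
    have hmq : ((carlPoly t q i) ^ q).Monic := hm.pow q
    have hdq : ((carlPoly t q i) ^ q).natDegree = q ^ (i + 1) := by
      rw [natDegree_pow, hd, pow_succ, mul_comm]
    have hlt : (C t * carlPoly t q i).natDegree < ((carlPoly t q i) ^ q).natDegree := by
      rw [natDegree_C_mul ht, hd, hdq, pow_succ]
      have hp : 0 < q ^ i := Nat.pow_pos (by omega)
      nlinarith
    have hdeglt : (C t * carlPoly t q i).degree < ((carlPoly t q i) ^ q).degree :=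
      Polynomial.degree_lt_degree hlt
    refine ⟨hmq.add_of_right hdeglt, ?_⟩
    show (C t * carlPoly t q i + carlPoly t q i ^ q).natDegree = q ^ (i + 1)
    rw [natDegree_add_eq_right_of_natDegree_lt hlt, hdq]

theorem carlPoly_derivative {R : Type} [Field R] (t : R) {q : ℕ} (hq0 : (q : R) = 0) :
    ∀ i, derivative (carlPoly t q i) = C (t ^ i)
  | 0 => by simp [carlPoly]
  | (i + 1) => by
    show derivative (C t * carlPoly t q i + carlPoly t q i ^ q) = C (t ^ (i + 1))
    rw [derivative_add, derivative_C_mul, carlPoly_derivative t hq0 i,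
      derivative_pow, carlPoly_derivative t hq0 i, hq0]
    simp [← C_mul, pow_succ, mul_comm]

section Carlitz

variable {Fq : Type} [Field Fq] [Fintype Fq]

local notation "K" => RatFunc Fq
local notation "Kbar" => AlgebraicClosure (RatFunc Fq)

theorem algebraMap_ratFunc_apply (c : Fq) : algebraMap Fq K c = RatFunc.C c := by
  rw [IsScalarTower.algebraMap_apply Fq (Polynomial Fq) K]
  simp [Polynomial.algebraMap_eq, RatFunc.algebraMap_C]

/-- The polynomial over `K = 𝔽_q(T)` computing the Carlitz action of `f`. -/
noncomputable def carlP (f : Polynomial Fq) : Polynomial K :=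
  f.sum fun i _ => C (RatFunc.C (f.coeff i)) * carlPoly RatFunc.X (Fintype.card Fq) i

theorem aeval_carlPoly (ψ : Polynomial Fq →+* AddMonoid.End Kbar) (hψ : IsCarlitz ψ) :
    ∀ (i : ℕ) (α : Kbar), aeval α (carlPoly (RatFunc.X : K) (Fintype.card Fq) i) = ψ (X ^ i) α
  | 0, α => by simp [carlPoly]
  | (i + 1), α => by
    have h : ψ (X ^ (i + 1)) α = ψ X (ψ (X ^ i) α) := by
      rw [pow_succ, mul_comm, map_mul]; rfl
    rw [h, hψ.1, ← aeval_carlPoly ψ hψ i α]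
    show aeval α (C RatFunc.X * carlPoly RatFunc.X (Fintype.card Fq) i
        + carlPoly RatFunc.X (Fintype.card Fq) i ^ (Fintype.card Fq)) = _
    rw [map_add, map_mul, aeval_C, map_pow]

theorem aeval_carlP (ψ : Polynomial Fq →+* AddMonoid.End Kbar) (hψ : IsCarlitz ψ)
    (f : Polynomial Fq) (α : Kbar) : aeval α (carlP f) = ψ f α := by
  conv_rhs => rw [← Polynomial.sum_C_mul_X_pow_eq f]
  rw [Polynomial.sum_def, carlP, Polynomial.sum_def, map_sum, map_sum]
  rw [show ((∑ x ∈ f.support, ψ (C (f.coeff x) * X ^ x)) α)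
      = ∑ x ∈ f.support, ψ (C (f.coeff x) * X ^ x) α from AddMonoidHom.finset_sum_apply _ _ _]
  refine Finset.sum_congr rfl fun i _ => ?_
  have h2 : ψ (C (f.coeff i) * X ^ i) α = ψ (C (f.coeff i)) (ψ (X ^ i) α) := by
    rw [map_mul]; rfl
  rw [map_mul, aeval_C, h2, hψ.2, aeval_carlPoly ψ hψ]

theorem carlP_natDegree {f : Polynomial Fq} (hf : f ≠ 0) :
    (carlP f).natDegree = Fintype.card Fq ^ f.natDegree := by
  have hq : 1 < Fintype.card Fq := Fintype.one_lt_card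
  set q := Fintype.card Fq with hqdef
  set n := f.natDegree with hndef
  have hbound : (carlP f).degree ≤ ((q ^ n : ℕ) : WithBot ℕ) := by
    rw [carlP, Polynomial.sum_def]
    refine (Polynomial.degree_sum_le _ _).trans ?_
    rw [Finset.sup_le_iff]
    intro i hi
    obtain ⟨hm, hd⟩ := carlPoly_monic_natDegree (RatFunc.X_ne_zero : (RatFunc.X : K) ≠ 0) hq i
    refine (degree_mul_le _ _).trans ?_
    have h2 : (carlPoly (RatFunc.X : K) q i).degree = ((q ^ i : ℕ) : WithBot ℕ) := by
      rw [degree_eq_natDegree hm.ne_zero, hd]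
    calc (C (RatFunc.C (f.coeff i))).degree + (carlPoly (RatFunc.X : K) q i).degree
        ≤ 0 + ((q ^ i : ℕ) : WithBot ℕ) := add_le_add degree_C_le h2.le
      _ = ((q ^ i : ℕ) : WithBot ℕ) := zero_add _
      _ ≤ ((q ^ n : ℕ) : WithBot ℕ) := by
          exact_mod_cast Nat.pow_le_pow_right (by omega) (le_natDegree_of_mem_supp i hi)
  have hcoeff : (carlP f).coeff (q ^ n) = RatFunc.C (f.coeff n) := by
    rw [carlP, Polynomial.sum_def, finset_sum_coeff]
    rw [Finset.sum_eq_single n]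
    · obtain ⟨hm, hd⟩ := carlPoly_monic_natDegree (RatFunc.X_ne_zero : (RatFunc.X : K) ≠ 0) hq n
      rw [coeff_C_mul, ← hd, hm.coeff_natDegree, mul_one]
    · intro i hi hne
      obtain ⟨hm, hd⟩ := carlPoly_monic_natDegree (RatFunc.X_ne_zero : (RatFunc.X : K) ≠ 0) hq i
      have hlt : i < n := lt_of_le_of_ne (le_natDegree_of_mem_supp i hi) hne
      have hcz : (carlPoly (RatFunc.X : K) q i).coeff (q ^ n) = 0 := by
        apply coeff_eq_zero_of_natDegree_lt
        rw [hd]; exact Nat.pow_lt_pow_right hq hlt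
      rw [coeff_C_mul, hcz, mul_zero]
    · intro hn
      exact absurd (natDegree_mem_support_of_nonzero hf) hn
  have hne : RatFunc.C (f.coeff n) ≠ 0 := by
    have : f.coeff n ≠ 0 := by
      rw [hndef]; exact leadingCoeff_ne_zero.mpr hf
    exact fun h => this (RatFunc.C.injective (by rw [h, map_zero]))
  exact le_antisymm (natDegree_le_iff_degree_le.mpr hbound)
    (le_natDegree_of_ne_zero (by rw [hcoeff]; exact hne))

theorem carlP_derivative (f : Polynomial Fq) :
    derivative (carlP f) = C (algebraMap (Polynomial Fq) K f) := by
  have hq0 : ((Fintype.card Fq : ℕ) : K) = 0 := by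
    rw [← map_natCast (algebraMap Fq K) (Fintype.card Fq), FiniteField.cast_card_eq_zero,
      map_zero]
  have hrhs : algebraMap (Polynomial Fq) K f
      = ∑ i ∈ f.support, RatFunc.C (f.coeff i) * RatFunc.X ^ i := by
    conv_lhs => rw [← Polynomial.sum_C_mul_X_pow_eq f]
    rw [Polynomial.sum_def, map_sum]
    refine Finset.sum_congr rfl fun i _ => ?_
    rw [map_mul, map_pow, RatFunc.algebraMap_C, RatFunc.algebraMap_X]
  rw [carlP, Polynomial.sum_def, derivative_sum, hrhs, map_sum]
  refine Finset.sum_congr rfl fun i _ => ?_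
  rw [derivative_C_mul, carlPoly_derivative _ hq0, ← C_mul]

theorem carlP_separable {f : Polynomial Fq} (hf : f ≠ 0) : (carlP f).Separable := by
  have hu : algebraMap (Polynomial Fq) K f ≠ 0 :=
    (map_ne_zero_iff _ (RatFunc.algebraMap_injective Fq)).mpr hf
  exact ⟨0, C (algebraMap (Polynomial Fq) K f)⁻¹, by
    rw [carlP_derivative, zero_mul, zero_add, ← C_mul, inv_mul_cancel₀ hu, C_1]⟩

theorem carlitz_ker_ncard (ψ : Polynomial Fq →+* AddMonoid.End Kbar) (hψ : IsCarlitz ψ)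
    {f : Polynomial Fq} (hf : 0 < f.natDegree) :
    Nat.card {x : Kbar // ψ f x = 0} = Fintype.card Fq ^ f.natDegree := by
  have hq : 1 < Fintype.card Fq := Fintype.one_lt_card
  have hf0 : f ≠ 0 := fun h => by simp [h] at hf
  have hdeg := carlP_natDegree hf0
  have hP0 : carlP f ≠ 0 := by
    intro h
    rw [h, natDegree_zero] at hdeg
    exact (Nat.pow_pos (by omega)).ne hdeg
  have hsplit : Splits ((carlP f).map (algebraMap K Kbar)) := IsAlgClosed.splits _
  have hcard := Polynomial.card_rootSet_eq_natDegree (carlP_separable hf0) hsplit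
  have hequiv : {x : Kbar // ψ f x = 0} ≃ ((carlP f).rootSet Kbar) := by
    apply Equiv.subtypeEquivRight
    intro x
    rw [Polynomial.mem_rootSet]
    exact ⟨fun hx => ⟨hP0, by rw [aeval_carlP ψ hψ]; exact hx⟩,
      fun hx => by rw [← aeval_carlP ψ hψ]; exact hx.2⟩
  rw [Nat.card_congr hequiv, Nat.card_eq_fintype_card, hcard, hdeg]

/-- The `M`-torsion of the Carlitz module as an `𝔽_q`-subspace of `k̄`. -/
def carlKer (ψ : Polynomial Fq →+* AddMonoid.End Kbar) (hψ : IsCarlitz ψ)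
    (M : Polynomial Fq) : Submodule Fq Kbar where
  carrier := {x | ψ M x = 0}
  add_mem' := by
    intro a b ha hb
    simp only [Set.mem_setOf_eq] at *
    rw [map_add, ha, hb, add_zero]
  zero_mem' := map_zero (ψ M)
  smul_mem' := by
    intro c x hx
    simp only [Set.mem_setOf_eq] at *
    have hsm : c • x = ψ (C c) x := by
      rw [hψ.2, Algebra.smul_def, IsScalarTower.algebraMap_apply Fq K Kbar,
        algebraMap_ratFunc_apply]
    rw [hsm]
    calc ψ M (ψ (C c) x) = ψ (C c * M) x := by rw [mul_comm (C c) M, map_mul]; rfl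
      _ = ψ (C c) (ψ M x) := by rw [map_mul]; rfl
      _ = 0 := by rw [hx, map_zero]

theorem mem_carlKer {ψ : Polynomial Fq →+* AddMonoid.End Kbar} {hψ : IsCarlitz ψ}
    {M : Polynomial Fq} {x : Kbar} : x ∈ carlKer ψ hψ M ↔ ψ M x = 0 := Iff.rfl

end Carlitz

/-- **Proposition 2.6.**
Let `F` be an extension of `k = 𝔽_q(T)` inside `k̄` containing `Λ_M`, and let `E/F` be a
finite Galois extension (inside `k̄`) whose Galois group `G = Gal(E/F)` carries an
`A = 𝔽_q[T]`-module structure `c` (extending its group structure, written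
multiplicatively) under which `G` is `A`-isomorphic to `A/(M)`.  Then there exists
`α ∈ E` with `E = F(α)` such that `α` satisfies an equation `X^M - a = 0` with
`a ∈ F`, i.e. `α^M ∈ F` (powers being the Carlitz action). -/
theorem carlitz_A_cyclic_extension_is_kummer
    {Fq : Type} [Field Fq] [Fintype Fq]
    (ψ : Polynomial Fq →+* AddMonoid.End (AlgebraicClosure (RatFunc Fq)))
    (hψ : IsCarlitz ψ)
    (M : Polynomial Fq) (hM : 0 < M.natDegree)
    (F : IntermediateField (RatFunc Fq) (AlgebraicClosure (RatFunc Fq)))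
    -- Λ_M ⊆ F
    (hΛF : ∀ x : AlgebraicClosure (RatFunc Fq), ψ M x = 0 → x ∈ F)
    -- E : a finite Galois extension of F inside k̄
    (E : IntermediateField (↥F) (AlgebraicClosure (RatFunc Fq)))
    [FiniteDimensional (↥F) (↥E)] [IsGalois (↥F) (↥E)]
    -- an A-module structure on G = Gal(E/F)
    (c : Polynomial Fq → (↥E ≃ₐ[↥F] ↥E) → (↥E ≃ₐ[↥F] ↥E))
    (hadd : ∀ f σ τ, c f (σ * τ) = c f σ * c f τ)
    (hsmul_add : ∀ f g σ, c (f + g) σ = c f σ * c g σ)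
    (hsmul_mul : ∀ f g σ, c (f * g) σ = c f (c g σ))
    (hone : ∀ σ, c 1 σ = σ)
    -- under which G is A-isomorphic to A/(M)
    (j : (↥E ≃ₐ[↥F] ↥E) → Polynomial Fq ⧸ Ideal.span {M})
    (hj : Function.Bijective j)
    (hjadd : ∀ σ τ, j (σ * τ) = j σ + j τ)
    (hjsmul : ∀ f σ, j (c f σ) = Ideal.Quotient.mk (Ideal.span {M}) f * j σ) :
    ∃ α : ↥E, adjoin (↥F) {α} = ⊤ ∧
      ψ M (α : AlgebraicClosure (RatFunc Fq)) ∈ F := by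
  classical
  set Kbar := AlgebraicClosure (RatFunc Fq)
  set K := RatFunc Fq
  have hq : 1 < Fintype.card Fq := Fintype.one_lt_card
  have hM0 : M ≠ 0 := fun h => by simp [h] at hM
  -- the torsion module Λ_M
  set Λ : Submodule Fq Kbar := carlKer ψ hψ M with hΛdef
  have hΛcard : Nat.card ↥Λ = Fintype.card Fq ^ M.natDegree := carlitz_ker_ncard ψ hψ hM
  haveI : Finite ↥Λ := Nat.finite_of_card_ne_zero (by
    rw [hΛcard]; exact (Nat.pow_pos (by omega)).ne')
  haveI : Fintype ↥Λ := Fintype.ofFinite _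
  have hΛfinrank : Module.finrank Fq ↥Λ = M.natDegree := by
    have h1 : Fintype.card ↥Λ = Fintype.card Fq ^ Module.finrank Fq ↥Λ :=
      Module.card_eq_pow_finrank
    rw [← Nat.card_eq_fintype_card, hΛcard] at h1
    exact (Nat.pow_right_injective hq h1.symm)
  -- the quotient A/(M), treated via AdjoinRoot
  let pb := AdjoinRoot.powerBasis hM0
  haveI := pb.finite
  have hQfinrank : Module.finrank Fq (AdjoinRoot M) = M.natDegree := by
    rw [pb.finrank]; rfl
  -- a linear isomorphism A/(M) ≃ Λ_M
  obtain ⟨e⟩ : Nonempty (AdjoinRoot M ≃ₗ[Fq] ↥Λ) :=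
    FiniteDimensional.nonempty_linearEquiv_of_finrank_eq (by rw [hQfinrank, hΛfinrank])
  -- the additive injection from the Galois group into Λ_M ⊆ F
  let j' : (↥E ≃ₐ[↥F] ↥E) → AdjoinRoot M := j
  let lam : (↥E ≃ₐ[↥F] ↥E) → Kbar := fun σ => ((e (j' σ) : ↥Λ) : Kbar)
  have hlam0 : ∀ σ, ψ M (lam σ) = 0 := fun σ => (e (j' σ)).2
  let b : (↥E ≃ₐ[↥F] ↥E) → ↥F := fun σ => ⟨lam σ, hΛF _ (hlam0 σ)⟩
  have hj1 : j' 1 = 0 := by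
    have h := hjadd 1 1
    rw [mul_one] at h
    exact add_left_cancel (a := j' 1) (by rw [add_zero]; exact h.symm)
  have hb_add : ∀ σ τ, b (σ * τ) = b σ + b τ := by
    intro σ τ
    apply Subtype.ext
    show lam (σ * τ) = lam σ + lam τ
    show ((e (j' (σ * τ)) : ↥Λ) : Kbar) = _
    have : j' (σ * τ) = j' σ + j' τ := hjadd σ τ
    rw [this, map_add]
    rfl
  have hb_inj : ∀ σ, b σ = 0 → σ = 1 := by
    intro σ hσ
    have h1 : lam σ = 0 := congrArg Subtype.val hσ
    have h2 : e (j' σ) = 0 := Subtype.ext h1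
    have h3 : j' σ = 0 := by
      have := e.injective (by rw [h2, map_zero] : e (j' σ) = e 0)
      exact this
    have h4 : j σ = j 1 := by
      show j' σ = j' 1
      rw [h3, hj1]
    exact hj.1 h4
  -- choose θ with trace 1, and form the resolvent α
  haveI : Algebra.IsSeparable (↥F) (↥E) := IsGalois.to_isSeparable
  obtain ⟨θ, hθ⟩ := Algebra.trace_surjective (↥F) (↥E) 1
  have h1 : ∑ τ : (↥E ≃ₐ[↥F] ↥E), τ θ = 1 := by
    rw [← trace_eq_sum_automorphisms, hθ, map_one]
  set α : ↥E := -∑ τ : (↥E ≃ₐ[↥F] ↥E), algebraMap (↥F) (↥E) (b τ) * τ θ with hαdef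
  have key : ∀ σ : (↥E ≃ₐ[↥F] ↥E), σ α = α + algebraMap (↥F) (↥E) (b σ) := by
    intro σ
    have hre : ∑ τ : (↥E ≃ₐ[↥F] ↥E), algebraMap (↥F) (↥E) (b τ) * (σ * τ) θ
        = ∑ τ : (↥E ≃ₐ[↥F] ↥E), algebraMap (↥F) (↥E) (b (σ⁻¹ * τ)) * τ θ := by
      refine Fintype.sum_equiv (Equiv.mulLeft σ) _ _ fun τ => ?_
      simp only [Equiv.coe_mulLeft]
      rw [inv_mul_cancel_left]
    have hbb : ∀ τ, b (σ⁻¹ * τ) = b τ - b σ := by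
      intro τ
      have h := hb_add σ (σ⁻¹ * τ)
      rw [mul_inv_cancel_left] at h
      rw [h]; ring
    calc σ α = -∑ τ : (↥E ≃ₐ[↥F] ↥E), algebraMap (↥F) (↥E) (b τ) * (σ * τ) θ := by
          rw [hαdef, map_neg, map_sum]
          congr 1
          refine Finset.sum_congr rfl fun τ _ => ?_
          rw [map_mul, AlgEquiv.commutes]
          rfl
      _ = -∑ τ : (↥E ≃ₐ[↥F] ↥E), algebraMap (↥F) (↥E) (b (σ⁻¹ * τ)) * τ θ := by rw [hre]
      _ = -∑ τ : (↥E ≃ₐ[↥F] ↥E), (algebraMap (↥F) (↥E) (b τ)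
            - algebraMap (↥F) (↥E) (b σ)) * τ θ := by
          congr 1
          refine Finset.sum_congr rfl fun τ _ => ?_
          rw [hbb τ, map_sub]
      _ = α + algebraMap (↥F) (↥E) (b σ) * ∑ τ : (↥E ≃ₐ[↥F] ↥E), τ θ := by
          rw [hαdef]
          simp only [sub_mul, Finset.sum_sub_distrib, Finset.mul_sum]
          abel
      _ = α + algebraMap (↥F) (↥E) (b σ) := by rw [h1, mul_one]
  -- the element ψ M α, as an element of E
  set P : Polynomial K := carlP M with hPdef
  let g : ↥E → ↥E := fun x => ∑ i ∈ P.support,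
    algebraMap (↥F) (↥E) ⟨algebraMap K Kbar (P.coeff i), F.algebraMap_mem _⟩ * x ^ i
  have hg1 : ∀ x : ↥E, ((g x : ↥E) : Kbar) = ψ M (x : Kbar) := by
    intro x
    have : ((g x : ↥E) : Kbar) = ∑ i ∈ P.support, algebraMap K Kbar (P.coeff i)
        * (x : Kbar) ^ i := by
      show (E.val (g x) : Kbar) = _
      rw [map_sum]
      refine Finset.sum_congr rfl fun i _ => ?_
      rw [map_mul, map_pow]
      rfl
    rw [this, ← aeval_carlP ψ hψ M (x : Kbar)]
    rw [aeval_def, eval₂_eq_sum, Polynomial.sum_def]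
  have hg2 : ∀ (σ : ↥E ≃ₐ[↥F] ↥E) (x : ↥E), σ (g x) = g (σ x) := by
    intro σ x
    show σ (∑ i ∈ P.support, _) = _
    rw [map_sum]
    refine Finset.sum_congr rfl fun i _ => ?_
    rw [map_mul, map_pow, AlgEquiv.commutes]
  have hfix : ∀ σ : (↥E ≃ₐ[↥F] ↥E), σ (g α) = g α := by
    intro σ
    rw [hg2 σ α, key σ]
    apply Subtype.coe_injective
    show ((g (α + algebraMap (↥F) (↥E) (b σ)) : ↥E) : Kbar) = ((g α : ↥E) : Kbar)
    rw [hg1, hg1]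
    have hco : ((α + algebraMap (↥F) (↥E) (b σ) : ↥E) : Kbar)
        = (α : Kbar) + lam σ := by
      push_cast
      rfl
    rw [hco, map_add, hlam0 σ, add_zero]
  -- conclude ψ M α ∈ F
  have hbot : g α ∈ (⊥ : IntermediateField (↥F) (↥E)) := by
    rw [← IsGalois.fixedField_fixingSubgroup (⊥ : IntermediateField (↥F) (↥E))]
    intro σ
    exact hfix σ.1
  obtain ⟨y, hy⟩ := IntermediateField.mem_bot.mp hbot
  have hmem : ψ M (α : Kbar) ∈ F := by
    rw [← hg1 α, ← hy]
    show ((algebraMap (↥F) (↥E) y : ↥E) : Kbar) ∈ F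
    exact y.2
  -- conclude E = F(α)
  refine ⟨α, ?_, hmem⟩
  have hfixsub : (adjoin (↥F) {α}).fixingSubgroup = ⊥ := by
    ext σ
    rw [IntermediateField.mem_fixingSubgroup_iff, Subgroup.mem_bot]
    constructor
    · intro hσ
      have hα : σ α = α := hσ α (mem_adjoin_simple_self (↥F) α)
      have : algebraMap (↥F) (↥E) (b σ) = 0 := by
        have := key σ
        rw [hα] at this
        exact (add_eq_left.mp this.symm)
      have hb0 : b σ = 0 := by
        apply (algebraMap (↥F) (↥E)).injective
        rw [this, map_zero]
      exact hb_inj σ hb0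
    · intro hσ x hx
      rw [hσ]
      rfl
  have := IsGalois.fixedField_fixingSubgroup (adjoin (↥F) {α})
  rw [hfixsub] at this
  rw [← this]
  ext x
  simp only [IntermediateField.mem_top, iff_true]
  intro σ
  have hσ1 : (σ : ↥E ≃ₐ[↥F] ↥E) = 1 := Subgroup.mem_bot.mp σ.2
  show (σ : ↥E ≃ₐ[↥F] ↥E) x = x
  rw [hσ1]
  rfl
end

section
/- Let R be a product of fields and let V be a free R-module of rank 1. Suppose C is an R-submodule of B = V × ⋯ × V (n factors) which is strictly smaller than B. Then there exist elements t_1, …, t_n of R, not all 0, such that Σ_{i=1}^n t_i v_i = 0 for all (v_1, …, v_n) ∈ C. -/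
open scoped Classical

/-- The "slice" of a submodule of `(Fin n → ∀ i, F i)` at coordinate `i`. -/
def sliceSubmodule {ι : Type} (F : ι → Type) [∀ i, Field (F i)] {n : ℕ}
    (D : Submodule (∀ i, F i) (Fin n → ∀ i, F i)) (i : ι) :
    Submodule (F i) (Fin n → F i) where
  carrier := {y | ∃ x ∈ D, ∀ j, x j i = y j}
  add_mem' := by
    rintro a b ⟨x, hx, hxa⟩ ⟨z, hz, hzb⟩
    exact ⟨x + z, D.add_mem hx hz, fun j => by simp [hxa j, hzb j]⟩
  zero_mem' := ⟨0, D.zero_mem, fun j => rfl⟩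
  smul_mem' := by
    classical
    rintro c y ⟨x, hx, hxy⟩
    refine ⟨(Pi.single i c : ∀ k, F k) • x, D.smul_mem _ hx, fun j => ?_⟩
    simp [Pi.smul_apply, hxy j]

theorem slice_lt_top {ι : Type} [Fintype ι] (F : ι → Type) [∀ i, Field (F i)] {n : ℕ}
    (D : Submodule (∀ i, F i) (Fin n → ∀ i, F i)) (hD : D < ⊤) :
    ∃ i, sliceSubmodule F D i < ⊤ := by
  classical
  by_contra h
  push_neg at h
  have htop : ∀ i, sliceSubmodule F D i = ⊤ := fun i => by
    have := h i
    rwa [lt_top_iff_ne_top, not_ne_iff] at this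
  apply hD.ne
  rw [eq_top_iff]
  intro v _
  have hx : ∀ i : ι, ∃ x ∈ D, ∀ j, x j i = v j i := by
    intro i
    have : (fun j => v j i) ∈ sliceSubmodule F D i := (htop i).symm ▸ Submodule.mem_top
    exact this
  choose x hxD hxv using hx
  have : v = ∑ i, (Pi.single i (1 : F i) : ∀ k, F k) • x i := by
    funext j
    funext k
    rw [Finset.sum_apply, Finset.sum_apply]
    rw [Finset.sum_eq_single k]
    · simp [hxv k j]
    · intro i _ hik
      simp [Pi.single_apply, hik]
    · simp
  rw [this]
  exact Submodule.sum_mem D fun i _ => D.smul_mem _ (hxD i)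

/-- **Lemma 3.7** (see also [Ribet, p.71, Lemma]).
Let `R` be a (finite) product of fields and let `V` be a free `R`-module of rank `1`.
Suppose that `C` is an `R`-submodule of `B = V × ⋯ × V` (`n` times) which is strictly
smaller than `B`.  Then there are elements `t_1, …, t_n` of `R`, not all `0`, such that
`Σ t_i v_i = 0` for all `(v_1, …, v_n) ∈ C`. -/
theorem submodule_of_power_of_rank_one_killed_by_functional
    {ι : Type} [Fintype ι] (F : ι → Type) [∀ i, Field (F i)]
    (V : Type) [AddCommGroup V] [Module (∀ i, F i) V]
    -- V is a free module of rank one over R = Π i, F i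
    (eV : V ≃ₗ[∀ i, F i] (∀ i, F i))
    (n : ℕ)
    (C : Submodule (∀ i, F i) (Fin n → V))
    (hC : C < ⊤) :
    ∃ t : Fin n → (∀ i, F i), (∃ i, t i ≠ 0) ∧
      ∀ v ∈ C, ∑ j, t j • (v : Fin n → V) j = 0 := by
  classical
  set e : (Fin n → V) ≃ₗ[∀ i, F i] (Fin n → ∀ i, F i) :=
    LinearEquiv.piCongrRight fun _ => eV with he
  set D : Submodule (∀ i, F i) (Fin n → ∀ i, F i) := C.map (e : (Fin n → V) →ₗ[∀ i, F i] (Fin n → ∀ i, F i)) with hDdef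
  have hD : D < ⊤ := by
    have := (Submodule.orderIsoMapComap e).strictMono hC
    simpa using this
  obtain ⟨i, hi⟩ := slice_lt_top F D hD
  obtain ⟨f, hf0, hfker⟩ :=
    Submodule.exists_dual_map_eq_bot_of_lt_top hi inferInstance
  set a : Fin n → F i := fun j => f (Pi.single j 1) with ha
  have hfx : ∀ y : Fin n → F i, f y = ∑ j, y j * a j := by
    intro y
    rw [LinearMap.pi_apply_eq_sum_univ f y]
    refine Finset.sum_congr rfl fun j _ => ?_
    rw [smul_eq_mul]
    congr 1
    congr 1
    funext k
    simp [Pi.single_apply, eq_comm]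
  refine ⟨fun j => Pi.single i (a j), ?_, ?_⟩
  · by_contra h
    push_neg at h
    have haz : ∀ j, a j = 0 := by
      intro j
      have := h j
      have := congrFun this i
      simpa using this
    apply hf0
    refine LinearMap.ext fun y => ?_
    rw [hfx, LinearMap.zero_apply]
    simp [haz]
  · intro v hv
    have hvD : e v ∈ D := Submodule.mem_map_of_mem hv
    have hslice : (fun j => e v j i) ∈ sliceSubmodule F D i := ⟨e v, hvD, fun j => rfl⟩
    have hf : f (fun j => e v j i) = 0 := by
      have : f (fun j => e v j i) ∈ (sliceSubmodule F D i).map f :=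
        Submodule.mem_map_of_mem hslice
      rw [hfker] at this
      exact (Submodule.mem_bot (F i)).mp this
    apply eV.injective
    rw [map_sum, map_zero]
    have hcomp : ∀ j, eV (v j) = e v j := fun j => rfl
    funext k
    rw [Finset.sum_apply]
    by_cases hk : k = i
    · subst hk
      simp only [Pi.zero_apply]
      rw [← hf, hfx]
      refine Finset.sum_congr rfl fun j _ => ?_
      rw [map_smul, hcomp j]
      simp [Pi.single_apply, mul_comm]
    · simp only [Pi.zero_apply]
      refine Finset.sum_eq_zero fun j _ => ?_
      rw [map_smul, hcomp j]
      simp [Pi.single_apply, hk]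
end
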